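/- Let g : ℕ → ℕ → ℕ be defined by g(1,1) = 1, g(n,m) = 0 if n < m or m = 0, and g(n,m) = ∑_{k=1}^{m} g(n-1,k) for n ≥ 2, 1 ≤ m ≤ n. Then for all n ≥ 1 and 1 ≤ m ≤ n, g(n,m) = ((n - m + 1)/n) * C(n + m - 2, n - 1), where C denotes the binomial coefficient. -/
import Mathlib


/-- The ballot numbers `g(n,m)` (OEIS A009766): `g(1,1) = 1`, `g(n,m) = 0` if
`n < m` or `m = 0`, and `g(n,m) = ∑_{k=1}^m g(n-1,k)` for `n ≥ 2`, `1 ≤ m ≤ n`. -/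
def gseq : ℕ → ℕ → ℕ
  | 0, _ => 0
  | 1, m => if m = 1 then 1 else 0
  | n+2, m =>
      if m = 0 ∨ n + 2 < m then 0
      else ∑ k ∈ Finset.Icc 1 m, gseq (n+1) k

lemma sum_id (i : ℕ) : ∀ j : ℕ,
    ∑ k ∈ Finset.range (j+1), ((i+1 : ℚ) - k) * (Nat.choose (i+k) i : ℚ)
      = (i+1) * ((i+2 : ℚ) - j) / (i+2) * (Nat.choose (i+j+1) (i+1) : ℚ) := by
  intro j
  induction j with
  | zero => simp; field_simp
  | succ j ih =>
      rw [Finset.sum_range_succ, ih, show i+(j+1) = i+j+1 from by omega]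
      have hp : (Nat.choose (i+j+1+1) (i+1) : ℚ)
          = (Nat.choose (i+j+1) i : ℚ) + (Nat.choose (i+j+1) (i+1) : ℚ) := by
        have : i+j+1+1 = (i+j+1)+1 := by ring
        rw [this, Nat.choose_succ_succ]
        push_cast; ring
      have hr : (Nat.choose (i+j+1) (i+1) : ℚ) * (i+1)
          = (Nat.choose (i+j+1) i : ℚ) * (j+1) := by
        have := Nat.choose_succ_right_eq (i+j+1) i
        have h2 : i+j+1-i = j+1 := by omega
        rw [h2] at this
        exact_mod_cast congrArg (Nat.cast : ℕ → ℚ) this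
      rw [hp]
      push_cast
      have hi2 : (i:ℚ)+2 ≠ 0 := by positivity
      field_simp
      linear_combination hr

lemma gseq_key : ∀ i j : ℕ, j ≤ i + 1 →
    (gseq (i+1) (j+1) : ℚ) = ((i+1 : ℚ) - j) / (i+1) * (Nat.choose (i+j) i : ℚ) := by
  intro i
  induction i with
  | zero =>
      intro j hj
      interval_cases j <;> simp [gseq]
  | succ i ih =>
      intro j hj
      rcases Nat.lt_or_ge j (i+2) with hji | hji
      · -- j ≤ i+1, use the recurrence
        have hj' : j ≤ i + 1 := by omega
        have hcond : ¬ (j + 1 = 0 ∨ i + 2 < j + 1) := by omega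
        show ((gseq (i+2) (j+1) : ℕ) : ℚ) = _
        rw [show gseq (i+2) (j+1) = ∑ k ∈ Finset.Icc 1 (j+1), gseq (i+1) k from by
          rw [gseq, if_neg hcond]]
        have hIcc : ∑ k ∈ Finset.Icc 1 (j+1), gseq (i+1) k
            = ∑ k ∈ Finset.range (j+1), gseq (i+1) (k+1) := by
          rw [← Finset.Ico_add_one_right_eq_Icc, Finset.sum_Ico_eq_sum_range]
          apply Finset.sum_congr (by norm_num)
          intro k _
          rw [add_comm 1 k]
        rw [hIcc]
        push_cast
        have : ∀ k ∈ Finset.range (j+1), (gseq (i+1) (k+1) : ℚ)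
            = ((i+1 : ℚ) - k) / (i+1) * (Nat.choose (i+k) i : ℚ) := by
          intro k hk
          exact ih k (by simp at hk; omega)
        rw [Finset.sum_congr rfl this]
        have hsum : ∑ k ∈ Finset.range (j+1), ((i+1 : ℚ) - k) / (i+1) * (Nat.choose (i+k) i : ℚ)
            = (1/((i:ℚ)+1)) * ∑ k ∈ Finset.range (j+1), ((i+1 : ℚ) - k) * (Nat.choose (i+k) i : ℚ) := by
          rw [Finset.mul_sum]
          apply Finset.sum_congr rfl
          intro k _; ring
        rw [hsum, sum_id i j]
        rw [show i+1+j = i+j+1 from by omega]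
        have h1 : (i:ℚ)+1 ≠ 0 := by positivity
        have h2 : (i:ℚ)+2 ≠ 0 := by positivity
        push_cast
        field_simp
        ring
      · -- j = i+2, gseq = 0
        have hje : j = i + 2 := by omega
        subst hje
        have h0 : gseq (i+2) (i+2+1) = 0 := by
          rw [gseq, if_pos (Or.inr (by omega))]
        rw [h0]
        push_cast
        ring

theorem gseq_closed_form (n m : ℕ) (hn : 1 ≤ n) (hm1 : 1 ≤ m) (hmn : m ≤ n) :
    (gseq n m : ℚ) = (((n - m + 1 : ℕ) : ℚ) / (n : ℚ)) * (Nat.choose (n + m - 2) (n - 1) : ℚ) := by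
  obtain ⟨i, rfl⟩ : ∃ i, n = i + 1 := ⟨n - 1, by omega⟩
  obtain ⟨j, rfl⟩ : ∃ j, m = j + 1 := ⟨m - 1, by omega⟩
  have hji : j ≤ i := by omega
  rw [show i + 1 - (j + 1) + 1 = i + 1 - j from by omega,
      show i + 1 + (j + 1) - 2 = i + j from by omega,
      show i + 1 - 1 = i from by omega]
  rw [gseq_key i j (by omega)]
  rw [Nat.cast_sub (by omega : j ≤ i + 1)]
  push_cast
  ring
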